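/- arXiv:1108.0471 — 2 statements merged into one kernel-verified Lean document; each statement's English description precedes it below -/
import Mathlib

section
/- In PCL, the formula (b ↠ a) ∧ (a ↠ b) → a ∧ b is a theorem, where ↠ denotes contractual implication. -/
/-- Formulae of the contract logic PCL: intuitionistic propositional logic
extended with contractual implication ↠ and an indexed lax modality `says`. -/
inductive PCL (P At : Type) where
  | atom : At → PCL P At
  | top : PCL P At
  | bot : PCL P At
  | and : PCL P At → PCL P At → PCL P At
  | or : PCL P At → PCL P At → PCL P At
  | imp : PCL P At → PCL P At → PCL P At
  | cimp : PCL P At → PCL P At → PCL P At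
  | says : P → PCL P At → PCL P At

/-- Hilbert-style provability for PCL: intuitionistic propositional axioms,
modus ponens, the contractual-implication axioms
⊤↠⊤, (φ↠φ)→φ, (φ'→φ)→(φ↠ψ)→(ψ→ψ')→(φ'↠ψ'),
and the lax `says` axioms. -/
inductive Prov {P At : Type} (Γ : Set (PCL P At)) : PCL P At → Prop where
  | ax {φ} : φ ∈ Γ → Prov Γ φ
  | mp {φ ψ} : Prov Γ (.imp φ ψ) → Prov Γ φ → Prov Γ ψ
  | k (φ ψ) : Prov Γ (.imp φ (.imp ψ φ))
  | s (φ ψ χ) : Prov Γ (.imp (.imp φ (.imp ψ χ)) (.imp (.imp φ ψ) (.imp φ χ)))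
  | andI (φ ψ) : Prov Γ (.imp φ (.imp ψ (.and φ ψ)))
  | andE1 (φ ψ) : Prov Γ (.imp (.and φ ψ) φ)
  | andE2 (φ ψ) : Prov Γ (.imp (.and φ ψ) ψ)
  | orI1 (φ ψ) : Prov Γ (.imp φ (.or φ ψ))
  | orI2 (φ ψ) : Prov Γ (.imp ψ (.or φ ψ))
  | orE (φ ψ χ) : Prov Γ (.imp (.imp φ χ) (.imp (.imp ψ χ) (.imp (.or φ ψ) χ)))
  | topI : Prov Γ .top
  | botE (φ) : Prov Γ (.imp .bot φ)
  | ctop : Prov Γ (.cimp .top .top)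
  | cfix (φ) : Prov Γ (.imp (.cimp φ φ) φ)
  | cmono (φ φ' ψ ψ') :
      Prov Γ (.imp (.imp φ' φ) (.imp (.cimp φ ψ) (.imp (.imp ψ ψ') (.cimp φ' ψ'))))
  | saysI (A φ) : Prov Γ (.imp φ (.says A φ))
  | saysIdem (A φ) : Prov Γ (.imp (.says A (.says A φ)) (.says A φ))
  | saysMono (A φ ψ) : Prov Γ (.imp (.imp φ ψ) (.imp (.says A φ) (.says A ψ)))

/-!
A contract `φ ↠ ψ` entails `φ → ψ`: under the hypothesis `φ`, the antecedent of the contract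
weakens to `ψ`, and `(ψ ↠ ψ) → ψ` discharges it. So the two contracts give `a → b`, which
strengthens the antecedent of `b ↠ a` to `a ↠ a`, whence `a`; symmetrically `b`.
-/

namespace Prov

variable {P At : Type} {Γ : Set (PCL P At)}

theorem imp_self (φ : PCL P At) : Prov Γ (.imp φ φ) :=
  .mp (.mp (.s φ (.imp φ φ) φ) (.k φ (.imp φ φ))) (.k φ φ)

theorem deduction {φ ψ : PCL P At} (h : Prov (insert φ Γ) ψ) : Prov Γ (.imp φ ψ) := by
  induction h with
  | ax hχ =>
    rcases hχ with rfl | hχ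
    · exact imp_self _
    · exact .mp (.k _ _) (.ax hχ)
  | @mp α β _ _ ih₁ ih₂ => exact .mp (.mp (.s φ α β) ih₁) ih₂
  | k => exact .mp (.k _ _) (.k _ _)
  | s => exact .mp (.k _ _) (.s _ _ _)
  | andI => exact .mp (.k _ _) (.andI _ _)
  | andE1 => exact .mp (.k _ _) (.andE1 _ _)
  | andE2 => exact .mp (.k _ _) (.andE2 _ _)
  | orI1 => exact .mp (.k _ _) (.orI1 _ _)
  | orI2 => exact .mp (.k _ _) (.orI2 _ _)
  | orE => exact .mp (.k _ _) (.orE _ _ _)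
  | topI => exact .mp (.k _ _) .topI
  | botE => exact .mp (.k _ _) (.botE _)
  | ctop => exact .mp (.k _ _) .ctop
  | cfix => exact .mp (.k _ _) (.cfix _)
  | cmono => exact .mp (.k _ _) (.cmono _ _ _ _)
  | saysI => exact .mp (.k _ _) (.saysI _ _)
  | saysIdem => exact .mp (.k _ _) (.saysIdem _ _)
  | saysMono => exact .mp (.k _ _) (.saysMono _ _ _)

theorem of_cimp_of_imp {φ ψ : PCL P At} (hc : Prov Γ (.cimp ψ φ)) (hi : Prov Γ (.imp φ ψ)) :
    Prov Γ φ :=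
  .mp (.cfix φ) (.mp (.mp (.mp (.cmono ψ φ φ φ) hi) hc) (imp_self φ))

theorem cimp_mp {φ ψ : PCL P At} (hc : Prov Γ (.cimp φ ψ)) (h : Prov Γ φ) : Prov Γ ψ :=
  .mp (.cfix ψ) (.mp (.mp (.mp (.cmono φ ψ ψ ψ) (.mp (.k φ ψ) h)) hc) (imp_self ψ))

theorem cimp_imp (φ ψ : PCL P At) : Prov Γ (.imp (.cimp φ ψ) (.imp φ ψ)) :=
  deduction (deduction (cimp_mp (.ax (.inr (.inl rfl))) (.ax (.inl rfl))))

theorem imp_of_cimp {φ ψ : PCL P At} (h : Prov Γ (.cimp φ ψ)) : Prov Γ (.imp φ ψ) :=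
  .mp (cimp_imp φ ψ) h

theorem and_of_cimp_of_cimp {a b : PCL P At} (hba : Prov Γ (.cimp b a))
    (hab : Prov Γ (.cimp a b)) : Prov Γ (.and a b) :=
  .mp (.mp (.andI a b) (of_cimp_of_imp hba (imp_of_cimp hab)))
    (of_cimp_of_imp hab (imp_of_cimp hba))

end Prov

/-- ⊢ (b ↠ a) ∧ (a ↠ b) → a ∧ b is a theorem of PCL. -/
theorem stmt5 {P At : Type} (a b : PCL P At) :
    Prov (∅ : Set (PCL P At))
      (.imp (.and (.cimp b a) (.cimp a b)) (.and a b)) :=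
  have hcontracts := Prov.ax (Set.mem_insert (.and (.cimp b a) (.cimp a b)) ∅)
  Prov.deduction <|
    Prov.and_of_cimp_of_cimp (.mp (.andE1 _ _) hcontracts) (.mp (.andE2 _ _) hcontracts)
end

section
/- For the circular intuitionistic pair c_A = A says ((B says b) → a) and c_B = B says ((A says a) → b), the entailment c_A ∧ c_B ⊢ (A says a) ∧ (B says b) does NOT hold (it is not derivable in PCL). -/
/-!
Interpret formulas in `Prop` with every atom false, `A says φ` as `φ` and `φ ↠ ψ` as `ψ`.
This interpretation validates every axiom of PCL and is closed under modus ponens, so it is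
sound for `Prov`. Both contracts become `False → False`, hence true, while `A says a` is false.
-/

namespace PCL

variable {P At : Type}

def evalCollapsed (v : At → Prop) : PCL P At → Prop
  | .atom p => v p
  | .top => True
  | .bot => False
  | .and φ ψ => evalCollapsed v φ ∧ evalCollapsed v ψ
  | .or φ ψ => evalCollapsed v φ ∨ evalCollapsed v ψ
  | .imp φ ψ => evalCollapsed v φ → evalCollapsed v ψ
  | .cimp _ ψ => evalCollapsed v ψ
  | .says _ φ => evalCollapsed v φ

end PCL

theorem Prov.evalCollapsed_of_forall_mem {P At : Type} {Γ : Set (PCL P At)} {φ : PCL P At}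
    (v : At → Prop) (hΓ : ∀ γ ∈ Γ, γ.evalCollapsed v) (h : Prov Γ φ) :
    φ.evalCollapsed v := by
  induction h with
  | ax hmem => exact hΓ _ hmem
  | mp _ _ ihImp ihArg => exact ihImp ihArg
  | k => exact fun h _ => h
  | s => exact fun h1 h2 h3 => h1 h3 (h2 h3)
  | andI => exact And.intro
  | andE1 => exact And.left
  | andE2 => exact And.right
  | orI1 => exact Or.inl
  | orI2 => exact Or.inr
  | orE => exact fun h1 h2 h => h.elim h1 h2
  | topI | ctop => exact trivial
  | botE => exact False.elim
  | cfix | saysI | saysIdem => exact id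
  | cmono => exact fun _ hψ hψψ' => hψψ' hψ
  | saysMono => exact id

theorem stmt13_general {P At : Type} (A B : P) (a b : At) :
    ¬ Prov ({PCL.and (.says A (.imp (.says B (.atom b)) (.atom a)))
                     (.says B (.imp (.says A (.atom a)) (.atom b)))} : Set (PCL P At))
        (.and (.says A (.atom a)) (.says B (.atom b))) := by
  intro h
  have hsound := h.evalCollapsed_of_forall_mem (fun _ => False)
    (by rintro _ rfl; exact ⟨id, id⟩)
  exact hsound.1

/-- for the circular intuitionistic pair
c_A = A says ((B says b) → a) and c_B = B says ((A says a) → b),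
with a ≠ b and A ≠ B, the entailment c_A ∧ c_B ⊢ (A says a) ∧ (B says b)
does NOT hold in PCL. -/
theorem stmt13 {P At : Type} (A B : P) (a b : At) (hP : A ≠ B) (hAt : a ≠ b) :
    ¬ Prov ({PCL.and (.says A (.imp (.says B (.atom b)) (.atom a)))
                     (.says B (.imp (.says A (.atom a)) (.atom b)))} : Set (PCL P At))
        (.and (.says A (.atom a)) (.says B (.atom b))) :=
  stmt13_general A B a b
end
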